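/- arXiv:2605.04405 — 4 statements merged into one kernel-verified Lean document; each statement's English description precedes it below -/
import Mathlib

section
/- Let E be a real inner product space, G : E → E, g ∈ E, ε ≥ 0 with ε ≤ ‖g‖ and ‖G(x) − g‖ ≤ ε for all x ∈ E. Let q, p : ℝ → E be differentiable with p(0) = 0 and p'(t) = −G(q(t)) for all t. Then for every t ≥ 0, ‖p(t)‖ ≥ (‖g‖ − ε)·t, and consequently the kinetic energy satisfies (1/2)‖p(t)‖² ≥ (1/2)·(‖g‖ − ε)²·t². -/
/-!
Since `p' = -G ∘ q` stays within `ε` of `-g`, the mean value inequality keeps `p t` within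
`ε t` of `-t • g`; the reverse triangle inequality then gives `‖p t‖ ≥ (‖g‖ - ε) t ≥ 0`,
and squaring gives the kinetic energy bound.
-/

open Set

section

variable {F : Type*} [NormedAddCommGroup F] [NormedSpace ℝ F]
  {f f' : ℝ → F} {v : F} {ε t : ℝ}

theorem norm_sub_sub_smul_le_of_norm_deriv_sub_le (hf : ∀ s, HasDerivAt f (f' s) s)
    (hf' : ∀ s, ‖f' s - v‖ ≤ ε) (ht : 0 ≤ t) :
    ‖f t - f 0 - t • v‖ ≤ ε * t := by
  have hdrift : ∀ s, HasDerivAt (fun s => f s - s • v) (f' s - v) s := fun s => by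
    simpa only [one_smul, Pi.sub_def] using (hf s).sub ((hasDerivAt_id' s).smul_const v)
  have := norm_image_sub_le_of_norm_deriv_le_segment'
    (fun s _ => (hdrift s).hasDerivWithinAt) (fun s _ => hf' s) t ⟨ht, le_rfl⟩
  simpa [sub_sub_eq_add_sub, sub_add_eq_sub_sub, sub_right_comm] using this

theorem mul_le_norm_sub_of_norm_deriv_sub_le (hf : ∀ s, HasDerivAt f (f' s) s)
    (hf' : ∀ s, ‖f' s - v‖ ≤ ε) (ht : 0 ≤ t) :
    (‖v‖ - ε) * t ≤ ‖f t - f 0‖ := by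
  have hdev := norm_sub_sub_smul_le_of_norm_deriv_sub_le hf hf' ht
  have htri := norm_sub_norm_le (t • v) (t • v - (f t - f 0))
  rw [sub_sub_cancel, norm_sub_rev, norm_smul, Real.norm_of_nonneg ht] at htri
  linarith

end

theorem kinetic_lower_bound_general {E : Type*} [NormedAddCommGroup E] [InnerProductSpace ℝ E]
    (G : E → E) (g : E) (ε : ℝ) (hεg : ε ≤ ‖g‖)
    (hG : ∀ x : E, ‖G x - g‖ ≤ ε)
    (q p : ℝ → E)
    (hp0 : p 0 = 0) (hp : ∀ t : ℝ, HasDerivAt p (-G (q t)) t) :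
    ∀ t : ℝ, 0 ≤ t →
      (‖g‖ - ε) * t ≤ ‖p t‖ ∧
      (1 / 2) * (‖g‖ - ε) ^ 2 * t ^ 2 ≤ (1 / 2) * ‖p t‖ ^ 2 := by
  intro t ht
  have hforce : ∀ s, ‖-G (q s) - -g‖ ≤ ε := fun s => by
    rw [sub_neg_eq_add, neg_add_eq_sub, norm_sub_rev]
    exact hG (q s)
  have hmomentum : (‖g‖ - ε) * t ≤ ‖p t‖ := by
    simpa [hp0] using mul_le_norm_sub_of_norm_deriv_sub_le hp hforce ht
  refine ⟨hmomentum, ?_⟩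
  rw [mul_assoc, ← mul_pow]
  gcongr

/-- Quadratic lower bound on kinetic energy for a sample started at rest
on a region where the gradient field stays within `ε` of a vector `g` with `ε ≤ ‖g‖`. -/
theorem kinetic_lower_bound {E : Type*} [NormedAddCommGroup E] [InnerProductSpace ℝ E]
    (G : E → E) (g : E) (ε : ℝ) (hε : 0 ≤ ε) (hεg : ε ≤ ‖g‖)
    (hG : ∀ x : E, ‖G x - g‖ ≤ ε)
    (q p : ℝ → E) (hq : Differentiable ℝ q)
    (hp0 : p 0 = 0) (hp : ∀ t : ℝ, HasDerivAt p (-G (q t)) t) :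
    ∀ t : ℝ, 0 ≤ t →
      (‖g‖ - ε) * t ≤ ‖p t‖ ∧
      (1 / 2) * (‖g‖ - ε) ^ 2 * t ^ 2 ≤ (1 / 2) * ‖p t‖ ^ 2 :=
  kinetic_lower_bound_general G g ε hεg hG q p hp0 hp
end

section
/- Let E be a complete real inner product space, q₀ ∈ E, λ > 0, and let V : E → ℝ be differentiable with V(x) ≥ (λ/2)‖x − q₀‖² for all x ∈ E. Let q, p : ℝ → E be differentiable with q'(t) = p(t) and p'(t) = −∇V(q(t)) for all t. Then for every t ∈ ℝ, ‖q(t) − q₀‖² ≤ (2/λ)·((1/2)‖p(0)‖² + V(q(0))). -/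
/-! Along a solution of Hamilton's equations the energy `½‖p‖² + V(q)` has derivative
`⟪p, -∇V(q)⟫ + ⟪∇V(q), p⟫ = 0`, so it keeps its initial value. Since the kinetic term is
nonnegative, coercivity gives `(λ/2)‖q(t) - q₀‖² ≤ V(q(t)) ≤ H(t) = H(0)`. -/

noncomputable section

open InnerProductSpace

variable {E : Type*} [NormedAddCommGroup E]

def hamiltonian (V : E → ℝ) (x v : E) : ℝ := (1 / 2) * ‖v‖ ^ 2 + V x

theorem sq_norm_sub_le_of_coercive {V : E → ℝ} {q₀ : E} {lam : ℝ} (hlam : 0 < lam)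
    (hVcoercive : ∀ x : E, (lam / 2) * ‖x - q₀‖ ^ 2 ≤ V x) (x v : E) :
    ‖x - q₀‖ ^ 2 ≤ (2 / lam) * hamiltonian V x v := by
  rw [div_mul_eq_mul_div, le_div_iff₀ hlam]
  have := hVcoercive x
  unfold hamiltonian
  nlinarith [sq_nonneg ‖v‖]

variable [InnerProductSpace ℝ E] [CompleteSpace E]

theorem hasDerivAt_hamiltonian_of_hamilton_eq {V : E → ℝ} {q p : ℝ → E} {t : ℝ}
    (hV : DifferentiableAt ℝ V (q t)) (hq : HasDerivAt q (p t) t)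
    (hp : HasDerivAt p (-gradient V (q t)) t) :
    HasDerivAt (fun s ↦ hamiltonian V (q s) (p s)) 0 t := by
  have hkin : HasDerivAt (fun s ↦ ‖p s‖ ^ 2) (2 * ⟪p t, -gradient V (q t)⟫_ℝ) t := by
    simpa only [mul_comm] using hp.norm_sq
  have hpot : HasDerivAt (fun s ↦ V (q s)) ⟪gradient V (q t), p t⟫_ℝ t := by
    simpa only [toDual_apply_apply, Function.comp_def] using
      hV.hasGradientAt.hasFDerivAt.comp_hasDerivAt t hq
  refine ((hkin.const_mul (1 / 2)).add hpot).congr_deriv ?_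
  rw [inner_neg_right, real_inner_comm (p t)]
  ring

theorem hamiltonian_eq_of_hamilton_eq {V : E → ℝ} (hV : Differentiable ℝ V) {q p : ℝ → E}
    (hq : ∀ t, HasDerivAt q (p t) t) (hp : ∀ t, HasDerivAt p (-gradient V (q t)) t) (t s : ℝ) :
    hamiltonian V (q t) (p t) = hamiltonian V (q s) (p s) :=
  have hH := fun u ↦ hasDerivAt_hamiltonian_of_hamilton_eq (hV (q u)) (hq u) (hp u)
  is_const_of_deriv_eq_zero (fun u ↦ (hH u).differentiableAt) (fun u ↦ (hH u).deriv) t s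

end

/-- Confinement in a quadratically coercive potential basin: the
displacement from the basin center is bounded via the initial total energy. -/
theorem basin_confinement {E : Type*} [NormedAddCommGroup E] [InnerProductSpace ℝ E]
    [CompleteSpace E]
    (q₀ : E) (lam : ℝ) (hlam : 0 < lam)
    (V : E → ℝ) (hV : Differentiable ℝ V)
    (hVcoercive : ∀ x : E, (lam / 2) * ‖x - q₀‖ ^ 2 ≤ V x)
    (q p : ℝ → E)
    (hq : ∀ t : ℝ, HasDerivAt q (p t) t)
    (hp : ∀ t : ℝ, HasDerivAt p (-gradient V (q t)) t) :
    ∀ t : ℝ, ‖q t - q₀‖ ^ 2 ≤ (2 / lam) * ((1 / 2) * ‖p 0‖ ^ 2 + V (q 0)) := fun t ↦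
  calc ‖q t - q₀‖ ^ 2 ≤ (2 / lam) * hamiltonian V (q t) (p t) :=
        sq_norm_sub_le_of_coercive hlam hVcoercive _ _
    _ = (2 / lam) * hamiltonian V (q 0) (p 0) := by
        rw [hamiltonian_eq_of_hamilton_eq hV hq hp t 0]
end

section
/- Let d be a natural number, η ∈ ℝ, let F : (Fin d → ℝ) → (Fin d → ℝ) be measurable, and let A : (Fin d → ℝ) →ₗ (Fin d → ℝ) be a linear map. Then the symplectic Euler map Φ : ((Fin d → ℝ) × (Fin d → ℝ)) → ((Fin d → ℝ) × (Fin d → ℝ)) defined by Φ(q, p) = (q + η • A(p − η • F(q)), p − η • F(q)) preserves the product Lebesgue (volume) measure on (Fin d → ℝ) × (Fin d → ℝ). -/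
open MeasureTheory

/-!
The symplectic Euler step factors as the kick `(q, p) ↦ (q, p - η • F q)` followed by the drift
`(q, p) ↦ (q + η • A p, p)`. Each is a shear: it translates one factor of the product by an amount
depending only on the other factor, so by Fubini and translation invariance of Lebesgue measure it
preserves the product measure, whatever the (measurable) shift.
-/

section Shear

variable {α G : Type*} [MeasurableSpace α] [MeasurableSpace G] [Add G] [MeasurableAdd₂ G]
  (μ : Measure α) (ν : Measure G) [SFinite μ] [SFinite ν] [ν.IsAddRightInvariant]
  {g : α → G}

theorem measurePreserving_shear_snd (hg : Measurable g) :
    MeasurePreserving (fun z : α × G => (z.1, z.2 + g z.1)) (μ.prod ν) (μ.prod ν) :=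
  (MeasurePreserving.id μ).skew_product (g := fun x y => y + g x)
    (measurable_snd.add (hg.comp measurable_fst))
    (Filter.Eventually.of_forall fun x => map_add_right_eq_self ν (g x))

theorem measurePreserving_shear_fst (hg : Measurable g) :
    MeasurePreserving (fun z : G × α => (z.1 + g z.2, z.2)) (ν.prod μ) (ν.prod μ) :=
  (Measure.measurePreserving_swap.comp (measurePreserving_shear_snd μ ν hg)).comp
    Measure.measurePreserving_swap

end Shear

/-- The symplectic Euler map (kick followed by drift) preserves the
product Lebesgue measure on phase space (Liouville-type volume preservation). -/
theorem symplectic_euler_measure_preserving (d : ℕ) (η : ℝ)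
    (F : (Fin d → ℝ) → (Fin d → ℝ)) (hF : Measurable F)
    (A : (Fin d → ℝ) →ₗ[ℝ] (Fin d → ℝ)) :
    MeasurePreserving
      (fun qp : (Fin d → ℝ) × (Fin d → ℝ) =>
        (qp.1 + η • A (qp.2 - η • F qp.1), qp.2 - η • F qp.1))
      volume volume := by
  have kick := measurePreserving_shear_snd volume volume (hF.const_smul η).neg
  have drift := measurePreserving_shear_fst volume volume
    (A.continuous_of_finiteDimensional.measurable.const_smul η)
  have factor : (fun qp : (Fin d → ℝ) × (Fin d → ℝ) =>
        (qp.1 + η • A (qp.2 - η • F qp.1), qp.2 - η • F qp.1)) =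
      (fun z => (z.1 + η • A z.2, z.2)) ∘ fun z => (z.1, z.2 + -(η • F z.1)) := by
    funext qp
    simp [sub_eq_add_neg]
  rw [factor, Measure.volume_eq_prod]
  exact drift.comp kick
end

section
/- Let E be a finite-dimensional real inner product space, η ∈ ℝ, let A : E →ₗ E be a linear map, let F : E → E be differentiable at q₀ ∈ E, and define Φ : E × E → E × E by Φ(q, p) = (q + η • A(p − η • F(q)), p − η • F(q)). Then Φ is differentiable at (q₀, p₀) for every p₀ ∈ E, and the determinant of its Fréchet derivative at (q₀, p₀), viewed as a linear endomorphism of E × E, equals 1. -/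
/-!
The symplectic Euler step is the drift `(q, p) ↦ (q + η A p, p)` applied after the kick
`(q, p) ↦ (q, p - η F q)`. The drift is linear and the derivative of the kick at `(q₀, p₀)` is
`(q, p) ↦ (q, p - η DF(q₀) q)`; both are shears of `E × E`, whose matrices are block
unitriangular, so each has determinant `1`.
-/

namespace LinearMap

variable {R M : Type*} [CommRing R] [AddCommGroup M] [Module R M] [Module.Free R M]
  [Module.Finite R M]

theorem det_prod_fst_add_comp_snd (L : M →ₗ[R] M) :
    LinearMap.det ((fst R M M + L ∘ₗ snd R M M).prod (snd R M M)) = 1 := by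
  classical
  let b := Module.Free.chooseBasis R M
  have hmat : toMatrix (b.prod b) (b.prod b) ((fst R M M + L ∘ₗ snd R M M).prod (snd R M M)) =
      Matrix.fromBlocks 1 (toMatrix b b L) 0 1 := by
    ext (i | i) (j | j) <;>
      simp [toMatrix_apply, Module.Basis.prod_apply, Matrix.one_apply, Finsupp.single_apply,
        eq_comm]
  rw [← det_toMatrix (b.prod b), hmat, Matrix.det_fromBlocks_zero₂₁, Matrix.det_one, one_mul]

theorem det_fst_prod_snd_sub_comp_fst (L : M →ₗ[R] M) :
    LinearMap.det ((fst R M M).prod (snd R M M - L ∘ₗ fst R M M)) = 1 := by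
  have hswap : (fst R M M).prod (snd R M M - L ∘ₗ fst R M M) =
      (LinearEquiv.prodComm R M M).toLinearMap ∘ₗ
        (fst R M M + (-L) ∘ₗ snd R M M).prod (snd R M M) ∘ₗ
        (LinearEquiv.prodComm R M M).symm.toLinearMap := by
    ext x <;> simp [sub_eq_add_neg]
  rw [hswap, det_conj, det_prod_fst_add_comp_snd]

end LinearMap

open LinearMap

theorem HasFDerivAt.fst_prod_snd_sub_comp_fst {𝕜 E G : Type*} [NontriviallyNormedField 𝕜]
    [NormedAddCommGroup E] [NormedSpace 𝕜 E] [NormedAddCommGroup G] [NormedSpace 𝕜 G]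
    {f : E → G} {f' : E →L[𝕜] G} {x : E × G} (hf : HasFDerivAt f f' x.1) :
    HasFDerivAt (fun y : E × G => (y.1, y.2 - f y.1))
      ((ContinuousLinearMap.fst 𝕜 E G).prod
        (ContinuousLinearMap.snd 𝕜 E G - f' ∘L ContinuousLinearMap.fst 𝕜 E G)) x :=
  hasFDerivAt_fst.prodMk (hasFDerivAt_snd.sub (hf.comp x hasFDerivAt_fst))

/-- The symplectic Euler map (constant-mass case) has unit Jacobian
determinant: its Fréchet derivative at any point is a linear endomorphism of
`E × E` with determinant 1. -/
theorem symplectic_euler_jacobian_det_one {E : Type*} [NormedAddCommGroup E]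
    [InnerProductSpace ℝ E] [FiniteDimensional ℝ E]
    (η : ℝ) (A : E →ₗ[ℝ] E) (F : E → E) (q₀ : E)
    (hF : DifferentiableAt ℝ F q₀) :
    ∀ p₀ : E,
      DifferentiableAt ℝ
        (fun qp : E × E => (qp.1 + η • A (qp.2 - η • F qp.1), qp.2 - η • F qp.1))
        (q₀, p₀) ∧
      LinearMap.det
        ((fderiv ℝ
          (fun qp : E × E => (qp.1 + η • A (qp.2 - η • F qp.1), qp.2 - η • F qp.1))
          (q₀, p₀)).toLinearMap) = 1 := by
  intro p₀
  let drift : E × E →L[ℝ] E × E :=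
    (ContinuousLinearMap.fst ℝ E E +
      (η • A).toContinuousLinearMap ∘L ContinuousLinearMap.snd ℝ E E).prod
      (ContinuousLinearMap.snd ℝ E E)
  have hkick := (hF.hasFDerivAt.const_smul η).fst_prod_snd_sub_comp_fst (x := (q₀, p₀))
  have hΦ : HasFDerivAt
      (fun qp : E × E => (qp.1 + η • A (qp.2 - η • F qp.1), qp.2 - η • F qp.1)) _ (q₀, p₀) :=
    drift.hasFDerivAt.comp (q₀, p₀) hkick
  refine ⟨hΦ.differentiableAt, ?_⟩
  rw [hΦ.fderiv, ContinuousLinearMap.toLinearMap_comp, det_comp]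
  have hdrift : (drift : E × E →ₗ[ℝ] E × E) =
      (fst ℝ E E + (η • A) ∘ₗ snd ℝ E E).prod (snd ℝ E E) := rfl
  rw [hdrift, det_prod_fst_add_comp_snd, one_mul]
  exact det_fst_prod_snd_sub_comp_fst (η • (fderiv ℝ F q₀ : E →ₗ[ℝ] E))
end
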